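/- Let K, T ≥ 1 be integers, let 𝒞 ⊆ ℝ^K be a nonempty compact convex set with ‖z‖₂ ≤ √K for all z ∈ 𝒞, and let R be a strictly convex, twice continuously differentiable nonnegative function on an open set containing 𝒞 whose Hessian satisfies ‖∇²R(z)‖₂ ≤ S for all z ∈ 𝒞. Let z^1, …, z^T ∈ 𝒞, and define y^1 ∈ argmin_{z ∈ 𝒞} R(z), y^t = (1/(t−1))·∑_{s<t} z^s for 2 ≤ t ≤ T, and y^{T+1} = (1/T)·∑_{s=1}^T z^s. Then ∑_{t=1}^T [ D_R(z^t ‖ y^t) − D_R(z^t ‖ y^{T+1}) ] ≤ 8·S·K·(1 + ln T). -/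

import Mathlib

open scoped RealInnerProductSpace

/-- The Bregman divergence `D_R(x ‖ y) = R(x) − R(y) − ⟨∇R(y), x − y⟩`. -/
noncomputable def breg {K : ℕ} (R : EuclideanSpace ℝ (Fin K) → ℝ)
    (x y : EuclideanSpace ℝ (Fin K)) : ℝ :=
  R x - R y - ⟪gradient R y, x - y⟫

lemma breg_eq {K : ℕ} (R : EuclideanSpace ℝ (Fin K) → ℝ) (x y : EuclideanSpace ℝ (Fin K)) :
    breg R x y = R x - R y - fderiv ℝ R y (x - y) := by
  unfold breg gradient
  rw [InnerProductSpace.toDual_symm_apply]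

lemma telesc (f : ℕ → ℝ) (T : ℕ) :
    ∑ t ∈ Finset.Icc 1 T, (f t - f (t+1)) = f 1 - f (T+1) := by
  induction T with
  | zero => simp
  | succ n ih => rw [Finset.sum_Icc_succ_top (by omega), ih]; ring

lemma harm (T : ℕ) : ∑ t ∈ Finset.Icc 1 T, ((t:ℝ))⁻¹ ≤ 1 + Real.log T := by
  have h := harmonic_le_one_add_log T
  have : ((harmonic T : ℚ) : ℝ) = ∑ t ∈ Finset.Icc 1 T, ((t:ℝ))⁻¹ := by
    rw [harmonic_eq_sum_Icc]; push_cast; rfl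
  linarith [this ▸ h]

lemma taylor_ub {K : ℕ} (C U : Set (EuclideanSpace ℝ (Fin K)))
    (hconv : Convex ℝ C) (hU : IsOpen U) (hCU : C ⊆ U)
    (R : EuclideanSpace ℝ (Fin K) → ℝ) (hsmooth : ContDiffOn ℝ 2 R U)
    (S : ℝ) (hhess : ∀ z ∈ C, ‖iteratedFDeriv ℝ 2 R z‖ ≤ S)
    (hS : 0 ≤ S) :
    ∀ a ∈ C, ∀ b ∈ C, R b - R a - fderiv ℝ R a (b - a) ≤ S * ‖b - a‖^2 := by
  have hdiff : ∀ x ∈ U, DifferentiableAt ℝ R x := fun x hx =>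
    (hsmooth.differentiableOn (by norm_num)).differentiableAt (hU.mem_nhds hx)
  have hG : ContDiffOn ℝ 1 (fderiv ℝ R) U := hsmooth.fderiv_of_isOpen hU (by norm_num)
  have hGdiff : ∀ x ∈ U, DifferentiableAt ℝ (fderiv ℝ R) x := fun x hx =>
    (hG.differentiableOn one_ne_zero).differentiableAt (hU.mem_nhds hx)
  have hGbound : ∀ x ∈ C, ‖fderiv ℝ (fderiv ℝ R) x‖ ≤ S := by
    intro x hx
    calc ‖fderiv ℝ (fderiv ℝ R) x‖
        = ‖iteratedFDeriv ℝ 0 (fderiv ℝ (fderiv ℝ R)) x‖ := (norm_iteratedFDeriv_zero (f := fderiv ℝ (fderiv ℝ R)) (x := x)).symm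
      _ = ‖iteratedFDeriv ℝ 1 (fderiv ℝ R) x‖ := norm_iteratedFDeriv_fderiv
      _ = ‖iteratedFDeriv ℝ 2 R x‖ := norm_iteratedFDeriv_fderiv
      _ ≤ S := hhess x hx
  have hLip : ∀ a ∈ C, ∀ x ∈ C, ‖fderiv ℝ R x - fderiv ℝ R a‖ ≤ S * ‖x - a‖ := fun a ha x hx =>
    hconv.norm_image_sub_le_of_norm_fderiv_le (fun u hu => hGdiff u (hCU hu)) hGbound ha hx
  intro a ha b hb
  set g : EuclideanSpace ℝ (Fin K) → ℝ := fun x => R x - fderiv ℝ R a x with hg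
  have hseg : segment ℝ a b ⊆ C := hconv.segment_subset ha hb
  have hgd : ∀ x ∈ segment ℝ a b, DifferentiableAt ℝ g x := fun x hx =>
    (hdiff x (hCU (hseg hx))).sub (fderiv ℝ R a).differentiableAt
  have hbound : ∀ x ∈ segment ℝ a b, ‖fderiv ℝ g x‖ ≤ S * ‖b - a‖ := by
    intro x hx
    have hx' : x ∈ C := hseg hx
    have e : fderiv ℝ g x = fderiv ℝ R x - fderiv ℝ R a := by
      rw [hg]
      rw [fderiv_fun_sub (hdiff x (hCU hx')) (fderiv ℝ R a).differentiableAt,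
        (fderiv ℝ R a).fderiv]
    rw [e]
    have hxa : ‖x - a‖ ≤ ‖b - a‖ := by
      obtain ⟨u, v, hu, hv, huv, rfl⟩ := hx
      have h2 : u • a + v • b - a = v • (b - a) := by
        have hu1 : u = 1 - v := by linarith
        subst hu1; module
      rw [h2, norm_smul, Real.norm_eq_abs, abs_of_nonneg hv]
      nlinarith [norm_nonneg (b - a)]
    calc ‖fderiv ℝ R x - fderiv ℝ R a‖ ≤ S * ‖x - a‖ := hLip a ha x hx'
      _ ≤ S * ‖b - a‖ := by nlinarith
  have key := (convex_segment a b).norm_image_sub_le_of_norm_fderiv_le hgd hbound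
    (left_mem_segment ℝ a b) (right_mem_segment ℝ a b)
  have e2 : g b - g a = R b - R a - fderiv ℝ R a (b - a) := by
    simp only [hg, map_sub]; ring
  calc R b - R a - fderiv ℝ R a (b - a) ≤ ‖g b - g a‖ := by
        rw [e2]; exact le_abs_self _
    _ ≤ S * ‖b - a‖ * ‖b - a‖ := key
    _ = S * ‖b - a‖ ^ 2 := by ring

/-- follow-the-average regret bound for Bregman divergences.  For a
nonempty compact convex `𝒞 ⊆ ℝ^K` contained in the ball of radius `√K`, a strictly
convex, C², nonnegative regularizer `R` on an open (convex) set `U ⊇ 𝒞` whose Hessian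
has operator norm at most `S` on `𝒞`, points `z^1,…,z^T ∈ 𝒞`, `y^1` a minimizer of `R`
over `𝒞`, `y^t` the running average of `z^1,…,z^{t−1}` for `2 ≤ t ≤ T` and `y^{T+1}`
the full average, we have
`∑_{t=1}^T [D_R(z^t‖y^t) − D_R(z^t‖y^{T+1})] ≤ 8 S K (1 + ln T)`. -/
theorem stmt14 {K T : ℕ} (hK : 1 ≤ K) (hT : 1 ≤ T)
    (C : Set (EuclideanSpace ℝ (Fin K)))
    (hne : C.Nonempty) (hcomp : IsCompact C) (hconv : Convex ℝ C)
    (hnormC : ∀ z ∈ C, ‖z‖ ≤ Real.sqrt K)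
    (U : Set (EuclideanSpace ℝ (Fin K))) (hU : IsOpen U) (hCU : C ⊆ U)
    (R : EuclideanSpace ℝ (Fin K) → ℝ)
    (hsconv : StrictConvexOn ℝ U R) (hsmooth : ContDiffOn ℝ 2 R U)
    (hnonneg : ∀ z ∈ U, 0 ≤ R z)
    (S : ℝ) (hhess : ∀ z ∈ C, ‖iteratedFDeriv ℝ 2 R z‖ ≤ S)
    (z : ℕ → EuclideanSpace ℝ (Fin K)) (hz : ∀ s ∈ Finset.Icc 1 T, z s ∈ C)
    (y : ℕ → EuclideanSpace ℝ (Fin K))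
    (hy1mem : y 1 ∈ C) (hy1min : ∀ x ∈ C, R (y 1) ≤ R x)
    (hyt : ∀ t, 2 ≤ t → t ≤ T →
      y t = ((t : ℝ) - 1)⁻¹ • ∑ s ∈ Finset.Icc 1 (t - 1), z s)
    (hyT : y (T + 1) = (T : ℝ)⁻¹ • ∑ s ∈ Finset.Icc 1 T, z s) :
    ∑ t ∈ Finset.Icc 1 T, (breg R (z t) (y t) - breg R (z t) (y (T + 1)))
      ≤ 8 * S * K * (1 + Real.log T) := by
  obtain ⟨w0, hw0⟩ := hne
  have hS : 0 ≤ S := le_trans (norm_nonneg _) (hhess w0 hw0)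
  -- unified formula for y t, 2 ≤ t ≤ T+1
  have hform : ∀ t, 2 ≤ t → t ≤ T + 1 →
      y t = ((t : ℝ) - 1)⁻¹ • ∑ s ∈ Finset.Icc 1 (t - 1), z s := by
    intro t h2 hle
    rcases eq_or_lt_of_le hle with he | hlt
    · subst he
      rw [hyT, Nat.add_sub_cancel]
      congr 1
      push_cast; ring
    · exact hyt t h2 (by omega)
  -- membership of the iterates
  have hyC : ∀ t, 1 ≤ t → t ≤ T + 1 → y t ∈ C := by
    intro t h1 hle
    rcases Nat.lt_or_ge t 2 with h | h
    · have ht1 : t = 1 := by omega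
      subst ht1; exact hy1mem
    · rw [hform t h hle, Finset.smul_sum]
      have hc2 : (2:ℝ) ≤ (t:ℝ) := by exact_mod_cast h
      have hcastpos : (0:ℝ) < (t:ℝ) - 1 := by linarith
      refine hconv.sum_mem (fun i _ => by positivity) ?_ (fun i hi => hz i ?_)
      · rw [Finset.sum_const, Nat.card_Icc, nsmul_eq_mul,
          show t - 1 + 1 - 1 = t - 1 from by omega, Nat.cast_sub h1, Nat.cast_one]
        field_simp
      · simp only [Finset.mem_Icc] at hi ⊢
        omega
  -- (t-1) • y t = partial sum
  have hA : ∀ t, 1 ≤ t → t ≤ T + 1 →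
      ((t : ℝ) - 1) • y t = ∑ s ∈ Finset.Icc 1 (t - 1), z s := by
    intro t h1 hle
    rcases Nat.lt_or_ge t 2 with h | h
    · have ht1 : t = 1 := by omega
      subst ht1
      rw [show ((1:ℕ):ℝ) - 1 = 0 from by norm_num, zero_smul,
        show (1 - 1 : ℕ) = 0 from rfl, Finset.Icc_eq_empty (by omega), Finset.sum_empty]
    · have hc2 : (2:ℝ) ≤ (t:ℝ) := by exact_mod_cast h
      rw [hform t h hle, smul_inv_smul₀ (ne_of_gt (by linarith : (0:ℝ) < (t:ℝ) - 1))]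
  -- key recursion
  have hkey : ∀ t, 1 ≤ t → t ≤ T → z t - y t = (t:ℝ) • (y (t+1) - y t) := by
    intro t ht1 ht2
    have e1 := hA (t+1) (by omega) (by omega)
    rw [Nat.add_sub_cancel] at e1
    have e1' : (t:ℝ) • y (t+1) = ∑ s ∈ Finset.Icc 1 t, z s := by
      rw [← e1]; congr 1; push_cast; ring
    have e2 := hA t ht1 (by omega)
    have e3 : ∑ s ∈ Finset.Icc 1 t, z s = (∑ s ∈ Finset.Icc 1 (t-1), z s) + z t := by
      conv_lhs => rw [show t = (t-1)+1 from by omega]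
      rw [Finset.sum_Icc_succ_top (by omega), show t-1+1 = t from by omega]
    have e4 : (t:ℝ) • y (t+1) = ((t:ℝ) - 1) • y t + z t := by rw [e1', e3, e2]
    rw [smul_sub, e4]
    module
  -- the cross terms cancel
  have hcard : (Finset.Icc 1 T).card = T := by rw [Nat.card_Icc]; omega
  have hsum0 : ∑ t ∈ Finset.Icc 1 T, (fderiv ℝ R (y (T+1))) (z t - y (T+1)) = 0 := by
    have hsum : ∑ s ∈ Finset.Icc 1 T, z s = (T:ℝ) • y (T+1) := by
      rw [hyT, smul_inv_smul₀ (Nat.cast_ne_zero.mpr (by omega))]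
    have hzero : ∑ t ∈ Finset.Icc 1 T, (z t - y (T+1)) = 0 := by
      rw [Finset.sum_sub_distrib, Finset.sum_const, hcard, hsum,
        ← Nat.cast_smul_eq_nsmul ℝ, sub_self]
    rw [← map_sum, hzero, map_zero]
  have taylor := taylor_ub C U hconv hU hCU R hsmooth S hhess hS
  set f : ℕ → ℝ := fun t => ((t:ℝ) - 1) * R (y t) with hf
  -- per-term bound
  have hterm : ∀ t ∈ Finset.Icc 1 T,
      R (y (T+1)) - R (y t) - (fderiv ℝ R (y t)) (z t - y t)
        ≤ R (y (T+1)) + (f t - f (t+1)) + S * (4*K) * (t:ℝ)⁻¹ := by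
    intro t ht
    simp only [Finset.mem_Icc] at ht
    obtain ⟨ht1, ht2⟩ := ht
    have htpos : (0:ℝ) < (t:ℝ) := by exact_mod_cast Nat.lt_of_lt_of_le Nat.zero_lt_one ht1
    have hytC : y t ∈ C := hyC t ht1 (by omega)
    have hyt1C : y (t+1) ∈ C := hyC (t+1) (by omega) (by omega)
    have hztC : z t ∈ C := hz t (Finset.mem_Icc.mpr ⟨ht1, ht2⟩)
    have hk := hkey t ht1 ht2
    have htay := taylor (y t) hytC (y (t+1)) hyt1C
    have hGzt : (fderiv ℝ R (y t)) (z t - y t)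
        = (t:ℝ) * (fderiv ℝ R (y t)) (y (t+1) - y t) := by
      rw [hk, map_smul]; rfl
    have hnn : (t:ℝ) * ‖y (t+1) - y t‖ = ‖z t - y t‖ := by
      rw [hk, norm_smul, Real.norm_eq_abs, abs_of_pos htpos]
    have hzb : ‖z t - y t‖ ≤ 2 * Real.sqrt K := by
      calc ‖z t - y t‖ ≤ ‖z t‖ + ‖y t‖ := norm_sub_le _ _
        _ ≤ 2 * Real.sqrt K := by linarith [hnormC (z t) hztC, hnormC (y t) hytC]
    have hsq : Real.sqrt K ^ 2 = (K:ℝ) := Real.sq_sqrt (by positivity)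
    have h1 : ‖z t - y t‖^2 ≤ 4 * K := by
      nlinarith [norm_nonneg (z t - y t), Real.sqrt_nonneg (K:ℝ)]
    have hquad : (t:ℝ) * ‖y (t+1) - y t‖^2 ≤ 4 * K * (t:ℝ)⁻¹ := by
      have h2 : (t:ℝ) * ‖y (t+1) - y t‖^2 * t = ‖z t - y t‖^2 := by
        rw [← hnn]; ring
      rw [← mul_le_mul_iff_of_pos_right htpos]
      calc (t:ℝ) * ‖y (t+1) - y t‖^2 * t = ‖z t - y t‖^2 := h2
        _ ≤ 4 * K := h1
        _ = 4 * K * (t:ℝ)⁻¹ * t := by field_simp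
    have hft : f t - f (t+1) = ((t:ℝ) - 1) * R (y t) - (t:ℝ) * R (y (t+1)) := by
      simp only [hf]; push_cast; ring
    rw [hGzt, hft]
    have m1 : (t:ℝ) * (R (y (t+1)) - R (y t) - (fderiv ℝ R (y t)) (y (t+1) - y t))
        ≤ (t:ℝ) * (S * ‖y (t+1) - y t‖^2) := mul_le_mul_of_nonneg_left htay htpos.le
    have m2 : S * ((t:ℝ) * ‖y (t+1) - y t‖^2) ≤ S * (4 * K * (t:ℝ)⁻¹) :=
      mul_le_mul_of_nonneg_left hquad hS
    nlinarith [m1, m2]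
  -- assemble
  have expand : ∀ t, breg R (z t) (y t) - breg R (z t) (y (T+1))
      = (R (y (T+1)) - R (y t) - (fderiv ℝ R (y t)) (z t - y t))
        + (fderiv ℝ R (y (T+1))) (z t - y (T+1)) := by
    intro t
    rw [breg_eq, breg_eq]
    ring
  calc ∑ t ∈ Finset.Icc 1 T, (breg R (z t) (y t) - breg R (z t) (y (T+1)))
      = (∑ t ∈ Finset.Icc 1 T,
          (R (y (T+1)) - R (y t) - (fderiv ℝ R (y t)) (z t - y t)))
        + ∑ t ∈ Finset.Icc 1 T, (fderiv ℝ R (y (T+1))) (z t - y (T+1)) := by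
        rw [← Finset.sum_add_distrib]
        exact Finset.sum_congr rfl (fun t _ => expand t)
    _ = ∑ t ∈ Finset.Icc 1 T,
          (R (y (T+1)) - R (y t) - (fderiv ℝ R (y t)) (z t - y t)) := by
        rw [hsum0, add_zero]
    _ ≤ ∑ t ∈ Finset.Icc 1 T,
          (R (y (T+1)) + (f t - f (t+1)) + S * (4*K) * (t:ℝ)⁻¹) :=
        Finset.sum_le_sum hterm
    _ = T * R (y (T+1)) + (f 1 - f (T+1))
        + S * (4*K) * ∑ t ∈ Finset.Icc 1 T, ((t:ℝ))⁻¹ := by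
        rw [Finset.sum_add_distrib, Finset.sum_add_distrib, Finset.sum_const, hcard,
          telesc f T, ← Finset.mul_sum, nsmul_eq_mul]
    _ ≤ 8 * S * K * (1 + Real.log T) := by
        have hf1 : f 1 = 0 := by simp [hf]
        have hfT : f (T+1) = T * R (y (T+1)) := by simp only [hf]; push_cast; ring
        rw [hf1, hfT]
        have hH := harm T
        have hc : (0:ℝ) ≤ S * (4*K) := by positivity
        have h3 : S * (4*K) * ∑ t ∈ Finset.Icc 1 T, ((t:ℝ))⁻¹
            ≤ S * (4*K) * (1 + Real.log T) := mul_le_mul_of_nonneg_left hH hc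
        have hlog : 0 ≤ Real.log T := Real.log_natCast_nonneg T
        nlinarith [mul_nonneg (mul_nonneg hS (by positivity : (0:ℝ) ≤ 4*(K:ℝ))) (by linarith : (0:ℝ) ≤ 1 + Real.log T)]
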